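/- arXiv:2009.08578 — 4 statements merged into one kernel-verified Lean document; each statement's English description precedes it below -/
import Mathlib

section
/- The synchronous RCAM dynamics on {-1,+1}^N with a continuous nondecreasing activation function f admits a fixed point; in fact the state space is finite and the energy E(z) = -Σ_ξ F((1/N)⟨z, u^ξ⟩), where F is an antiderivative of f, is nonincreasing along trajectories, so the sequence of energies converges. -/
/-!
Since `F' = f` is nondecreasing, `F` is convex, so it lies above its tangent lines:
`F m' - F m ≥ f m * (m' - m)`. Summing over the memories, the energy drop along one step is
at least `(1/N) Σ_i (z_i(t+1) - z_i(t)) h_i`, where `h_i = Σ_ξ f(m_ξ) u_i^ξ` is the local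
field; each term is `|h_i| - z_i(t) h_i ≥ 0` because `z_i(t+1) = sgn h_i` whenever `h_i ≠ 0`.
An antitone sequence taking finitely many values is eventually constant.
-/

open Finset

theorem Antitone.exists_forall_ge_eq_of_finite_range {α : Type*} [PartialOrder α] {a : ℕ → α}
    (ha : Antitone a) (hfin : (Set.range a).Finite) : ∃ T, ∀ t, T ≤ t → a t = a T := by
  have := hfin.to_subtype
  obtain ⟨T, hT⟩ := WellFoundedLT.antitone_chain_condition
    (f := Set.rangeFactorization a) fun _ _ h => ha h
  exact ⟨T, fun t ht => congrArg Subtype.val (hT t ht).symm⟩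

theorem mul_sub_le_sub_of_hasDerivAt_of_monotoneOn {S : Set ℝ} (hS : S.OrdConnected)
    {f F : ℝ → ℝ} (hF : ∀ x ∈ S, HasDerivAt F (f x) x) (hf : MonotoneOn f S)
    {a b : ℝ} (ha : a ∈ S) (hb : b ∈ S) : f a * (b - a) ≤ F b - F a := by
  have hIcc {c d : ℝ} (hc : c ∈ S) (hd : d ∈ S) :
      ContinuousOn F (Set.Icc c d) ∧ DifferentiableOn ℝ F (interior (Set.Icc c d)) :=
    ⟨fun x hx => (hF x (hS.out hc hd hx)).continuousAt.continuousWithinAt,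
      fun x hx =>
        (hF x (hS.out hc hd (interior_subset hx))).differentiableAt.differentiableWithinAt⟩
  rcases le_total a b with hab | hba
  · refine (convex_Icc a b).mul_sub_le_image_sub_of_le_deriv (hIcc ha hb).1 (hIcc ha hb).2
      (fun x hx => ?_) a ⟨le_rfl, hab⟩ b ⟨hab, le_rfl⟩ hab
    rw [interior_Icc] at hx
    have hxS : x ∈ S := hS.out ha hb (Set.Ioo_subset_Icc_self hx)
    rw [(hF x hxS).deriv]
    exact hf ha hxS hx.1.le
  · have := (convex_Icc b a).image_sub_le_mul_sub_of_deriv_le (hIcc hb ha).1 (hIcc hb ha).2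
      (C := f a) (fun x hx => ?_) b ⟨le_rfl, hba⟩ a ⟨hba, le_rfl⟩ hba
    · linarith
    rw [interior_Icc] at hx
    have hxS : x ∈ S := hS.out hb ha (Set.Ioo_subset_Icc_self hx)
    rw [(hF x hxS).deriv]
    exact hf hxS ha hx.2.le

theorem Real.mul_le_sign_mul_self {s r : ℝ} (hs : |s| ≤ 1) : s * r ≤ Real.sign r * r := by
  rcases lt_trichotomy r 0 with hr | rfl | hr
  · rw [Real.sign_of_neg hr]; nlinarith [neg_abs_le s]
  · simp
  · rw [Real.sign_of_pos hr]; nlinarith [le_abs_self s]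

theorem Set.finite_setOf_forall_eq_one_or_eq_neg_one (ι : Type*) [Finite ι] :
    {v : ι → ℝ | ∀ i, v i = 1 ∨ v i = -1}.Finite :=
  Set.Finite.pi' fun _ => Set.toFinite {1, -1}

noncomputable section

namespace RCAM

variable {N P : ℕ}

def overlap (u : Fin P → Fin N → ℝ) (v : Fin N → ℝ) (ξ : Fin P) : ℝ :=
  (1 / (N : ℝ)) * ∑ j, v j * u ξ j

def localField (f : ℝ → ℝ) (u : Fin P → Fin N → ℝ) (v : Fin N → ℝ) (i : Fin N) : ℝ :=
  ∑ ξ, f (overlap u v ξ) * u ξ i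

def energy (F : ℝ → ℝ) (u : Fin P → Fin N → ℝ) (v : Fin N → ℝ) : ℝ :=
  -∑ ξ, F (overlap u v ξ)

theorem abs_overlap_le_one {u : Fin P → Fin N → ℝ} {v : Fin N → ℝ} (hu : ∀ ξ j, |u ξ j| ≤ 1)
    (hv : ∀ j, |v j| ≤ 1) (ξ : Fin P) : |overlap u v ξ| ≤ 1 := by
  have hsum : |∑ j, v j * u ξ j| ≤ N := calc
    |∑ j, v j * u ξ j| ≤ ∑ j, |v j * u ξ j| := abs_sum_le_sum_abs _ _
    _ ≤ ∑ _j : Fin N, (1 : ℝ) := sum_le_sum fun j _ => by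
      rw [abs_mul]; exact mul_le_one₀ (hv j) (abs_nonneg _) (hu ξ j)
    _ = N := by simp
  rw [overlap, abs_mul, abs_of_nonneg (by positivity)]
  calc 1 / (N : ℝ) * |∑ j, v j * u ξ j| ≤ 1 / N * N := by gcongr
    _ ≤ 1 := by
      rcases N.eq_zero_or_pos with rfl | hN
      · simp
      · rw [one_div_mul_cancel (by positivity)]

theorem sum_mul_overlap_sub_overlap (c : Fin P → ℝ) (u : Fin P → Fin N → ℝ) (v w : Fin N → ℝ) :
    ∑ ξ, c ξ * (overlap u w ξ - overlap u v ξ) =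
      (1 / (N : ℝ)) * ∑ i, (w i - v i) * ∑ ξ, c ξ * u ξ i := by
  simp only [overlap, mul_sum, ← mul_sub, ← sum_sub_distrib]
  rw [sum_comm]
  exact sum_congr rfl fun i _ => sum_congr rfl fun ξ _ => by ring

theorem energy_le_of_update {f F : ℝ → ℝ}
    (hF : ∀ x ∈ Set.Icc (-1 : ℝ) 1, HasDerivAt F (f x) x) (hf : MonotoneOn f (Set.Icc (-1 : ℝ) 1))
    {u : Fin P → Fin N → ℝ} (hu : ∀ ξ j, |u ξ j| ≤ 1) {v w : Fin N → ℝ}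
    (hv : ∀ j, |v j| ≤ 1) (hw : ∀ j, |w j| ≤ 1)
    (hupdate : ∀ i, localField f u v i ≠ 0 → w i = Real.sign (localField f u v i)) :
    energy F u w ≤ energy F u v := by
  have hgain (i : Fin N) : 0 ≤ (w i - v i) * localField f u v i := by
    by_cases h0 : localField f u v i = 0
    · simp only [h0, mul_zero, le_refl]
    · rw [sub_mul, hupdate i h0]
      linarith [Real.mul_le_sign_mul_self (r := localField f u v i) (hv i)]
  have htangent (ξ : Fin P) : f (overlap u v ξ) * (overlap u w ξ - overlap u v ξ) ≤
      F (overlap u w ξ) - F (overlap u v ξ) :=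
    mul_sub_le_sub_of_hasDerivAt_of_monotoneOn Set.ordConnected_Icc hF hf
      (abs_le.1 (abs_overlap_le_one hu hv ξ)) (abs_le.1 (abs_overlap_le_one hu hw ξ))
  calc energy F u w = energy F u v - ∑ ξ, (F (overlap u w ξ) - F (overlap u v ξ)) := by
        simp only [energy, sum_sub_distrib]; ring
    _ ≤ energy F u v - ∑ ξ, f (overlap u v ξ) * (overlap u w ξ - overlap u v ξ) := by
        gcongr with ξ; exact htangent ξ
    _ = energy F u v - (1 / (N : ℝ)) * ∑ i, (w i - v i) * localField f u v i := by
        rw [sum_mul_overlap_sub_overlap]; rfl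
    _ ≤ energy F u v := sub_le_self _ (mul_nonneg (by positivity) (sum_nonneg fun i _ => hgain i))

end RCAM

end

theorem rcam_energy_nonincreasing_and_eventually_constant_general
    (N P : ℕ) (f F : ℝ → ℝ)
    (hf_mono : MonotoneOn f (Set.Icc (-1 : ℝ) 1))
    (hF : ∀ x ∈ Set.Icc (-1 : ℝ) 1, HasDerivAt F (f x) x)
    (u : Fin P → Fin N → ℝ) (hu : ∀ ξ i, u ξ i = 1 ∨ u ξ i = -1)
    (z : ℕ → Fin N → ℝ) (hz : ∀ t i, z t i = 1 ∨ z t i = -1)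
    (hupdate : ∀ t i,
      (∑ ξ, f ((1 / (N : ℝ)) * ∑ j, z t j * u ξ j) * u ξ i) ≠ 0 →
        z (t + 1) i =
          Real.sign (∑ ξ, f ((1 / (N : ℝ)) * ∑ j, z t j * u ξ j) * u ξ i)) :
    (∀ t, -(∑ ξ, F ((1 / (N : ℝ)) * ∑ j, z (t + 1) j * u ξ j)) ≤
          -(∑ ξ, F ((1 / (N : ℝ)) * ∑ j, z t j * u ξ j))) ∧
    (∃ T, ∀ t, T ≤ t →
      -(∑ ξ, F ((1 / (N : ℝ)) * ∑ j, z t j * u ξ j)) =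
      -(∑ ξ, F ((1 / (N : ℝ)) * ∑ j, z T j * u ξ j))) := by
  have hspin {v : Fin N → ℝ} (hv : ∀ i, v i = 1 ∨ v i = -1) (i : Fin N) : |v i| ≤ 1 :=
    ((abs_eq zero_le_one).2 (hv i)).le
  have hstep (t : ℕ) : RCAM.energy F u (z (t + 1)) ≤ RCAM.energy F u (z t) :=
    RCAM.energy_le_of_update hF hf_mono (fun ξ => hspin (hu ξ)) (hspin (hz t))
      (hspin (hz (t + 1))) (hupdate t)
  refine ⟨hstep, (antitone_nat_of_succ_le hstep).exists_forall_ge_eq_of_finite_range ?_⟩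
  exact ((Set.finite_setOf_forall_eq_one_or_eq_neg_one (Fin N)).image (RCAM.energy F u)).subset
    (Set.range_subset_iff.2 fun t => ⟨z t, hz t, rfl⟩)

/-- Along any trajectory of the synchronous RCAM dynamics on `{-1,+1}^N`
with continuous nondecreasing activation `f` and antiderivative `F`, the
energy `E(z) = -Σ_ξ F((1/N)⟨z,u^ξ⟩)` is nonincreasing, and (the state space
being finite) the sequence of energies is eventually constant. -/
theorem rcam_energy_nonincreasing_and_eventually_constant
    (N P : ℕ) (hN : 0 < N) (f F : ℝ → ℝ)
    (hf_cont : ContinuousOn f (Set.Icc (-1 : ℝ) 1))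
    (hf_mono : MonotoneOn f (Set.Icc (-1 : ℝ) 1))
    (hF : ∀ x ∈ Set.Icc (-1 : ℝ) 1, HasDerivAt F (f x) x)
    (u : Fin P → Fin N → ℝ) (hu : ∀ ξ i, u ξ i = 1 ∨ u ξ i = -1)
    (z : ℕ → Fin N → ℝ) (hz : ∀ t i, z t i = 1 ∨ z t i = -1)
    (hupdate : ∀ t i,
      (∑ ξ, f ((1 / (N : ℝ)) * ∑ j, z t j * u ξ j) * u ξ i) ≠ 0 →
        z (t + 1) i =
          Real.sign (∑ ξ, f ((1 / (N : ℝ)) * ∑ j, z t j * u ξ j) * u ξ i))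
    (hupdate0 : ∀ t i,
      (∑ ξ, f ((1 / (N : ℝ)) * ∑ j, z t j * u ξ j) * u ξ i) = 0 →
        z (t + 1) i = z t i) :
    (∀ t, -(∑ ξ, F ((1 / (N : ℝ)) * ∑ j, z (t + 1) j * u ξ j)) ≤
          -(∑ ξ, F ((1 / (N : ℝ)) * ∑ j, z t j * u ξ j))) ∧
    (∃ T, ∀ t, T ≤ t →
      -(∑ ξ, F ((1 / (N : ℝ)) * ∑ j, z t j * u ξ j)) =
      -(∑ ξ, F ((1 / (N : ℝ)) * ∑ j, z T j * u ξ j))) :=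
  rcam_energy_nonincreasing_and_eventually_constant_general N P f F hf_mono hF u hu z hz hupdate
end

section
/- Under the RCAM update with a nondecreasing activation f, for any current state z and next state z', the inequality Σ_ξ f((1/N)⟨z,u^ξ⟩)·(⟨z',u^ξ⟩ - ⟨z,u^ξ⟩) ≥ 0 holds. -/
/-!
Regrouping by coordinates, `Σ_ξ w_ξ (⟨z',u^ξ⟩ - ⟨z,u^ξ⟩) = Σ_i a_i (z'_i - z_i)`. Each term is
nonnegative: either `a_i = 0`, or `z'_i = sgn a_i` and `a_i sgn a_i = |a_i| ≥ a_i z_i` since `|z_i| ≤ 1`.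
-/

open Finset

theorem Real.mul_sign_sub_nonneg (a : ℝ) {s : ℝ} (hs : |s| ≤ 1) : 0 ≤ a * (Real.sign a - s) := by
  obtain ⟨hs₁, hs₂⟩ := abs_le.mp hs
  rcases lt_trichotomy a 0 with ha | rfl | ha
  · rw [Real.sign_of_neg ha]; nlinarith
  · simp
  · rw [Real.sign_of_pos ha]; nlinarith

theorem mul_sub_nonneg_of_sign_update {a s s' : ℝ} (hs : s = 1 ∨ s = -1)
    (hupd : a ≠ 0 → s' = Real.sign a) (hupd0 : a = 0 → s' = s) : 0 ≤ a * (s' - s) := by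
  by_cases ha : a = 0
  · simp [ha]
  · rw [hupd ha]
    exact a.mul_sign_sub_nonneg (by rcases hs with rfl | rfl <;> norm_num)

theorem sum_mul_sum_mul_comm {ι κ R : Type*} [Fintype ι] [Fintype κ] [CommSemiring R]
    (w : ι → R) (u : ι → κ → R) (x : κ → R) :
    ∑ ξ, w ξ * ∑ j, x j * u ξ j = ∑ j, (∑ ξ, w ξ * u ξ j) * x j := by
  simp only [mul_sum, sum_mul]
  rw [sum_comm]
  exact sum_congr rfl fun _ _ => sum_congr rfl fun _ _ => by ring

theorem rcam_update_increases_weighted_overlap_general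
    (N P : ℕ)
    (u : Fin P → Fin N → ℝ)
    (z z' : Fin N → ℝ) (hz : ∀ i, z i = 1 ∨ z i = -1)
    (w : Fin P → ℝ)
    (a : Fin N → ℝ) (ha : ∀ i, a i = ∑ ξ, w ξ * u ξ i)
    (hupd : ∀ i, a i ≠ 0 → z' i = Real.sign (a i))
    (hupd0 : ∀ i, a i = 0 → z' i = z i) :
    (∀ i, 0 ≤ a i * (z' i - z i)) ∧
    0 ≤ ∑ ξ, w ξ * ((∑ j, z' j * u ξ j) - (∑ j, z j * u ξ j)) := by
  have hterm : ∀ i, 0 ≤ a i * (z' i - z i) := fun i =>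
    mul_sub_nonneg_of_sign_update (hz i) (hupd i) (hupd0 i)
  have hregroup : ∑ ξ, w ξ * ((∑ j, z' j * u ξ j) - (∑ j, z j * u ξ j))
      = ∑ i, a i * (z' i - z i) := by
    simp only [← sum_sub_distrib, ← sub_mul, sum_mul_sum_mul_comm, ha]
  exact ⟨hterm, hregroup ▸ sum_nonneg fun i _ => hterm i⟩

/-- Under the RCAM update, for the current state `z` and the next state `z'`,
each term `a i * (z' i - z i)` is nonnegative, and consequently
`Σ_ξ w ξ * (⟨z',u^ξ⟩ - ⟨z,u^ξ⟩) ≥ 0`. -/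
theorem rcam_update_increases_weighted_overlap
    (N P : ℕ) (hN : 0 < N) (f : ℝ → ℝ)
    (u : Fin P → Fin N → ℝ) (hu : ∀ ξ i, u ξ i = 1 ∨ u ξ i = -1)
    (z z' : Fin N → ℝ) (hz : ∀ i, z i = 1 ∨ z i = -1)
    (w : Fin P → ℝ) (hw : ∀ ξ, w ξ = f ((1 / (N : ℝ)) * ∑ j, z j * u ξ j))
    (a : Fin N → ℝ) (ha : ∀ i, a i = ∑ ξ, w ξ * u ξ i)
    (hupd : ∀ i, a i ≠ 0 → z' i = Real.sign (a i))
    (hupd0 : ∀ i, a i = 0 → z' i = z i) :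
    (∀ i, 0 ≤ a i * (z' i - z i)) ∧
    0 ≤ ∑ ξ, w ξ * ((∑ j, z' j * u ξ j) - (∑ j, z j * u ξ j)) :=
  rcam_update_increases_weighted_overlap_general N P u z z' hz w a ha hupd hupd0
end

section
/- If f is nondecreasing and F is a convex antiderivative of f, then for all x, x' ∈ [-1,1], F(x') - F(x) ≥ f(x)·(x' - x); consequently the RCAM energy decrease −ΔE = Σ_ξ [F(c'_ξ) - F(c_ξ)] is at least Σ_ξ f(c_ξ)·(c'_ξ - c_ξ) ≥ 0, where c_ξ = (1/N)⟨z,u^ξ⟩ and c'_ξ = (1/N)⟨z',u^ξ⟩ for a state z and its RCAM successor z'. -/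
/-!
An antiderivative `F` of a nondecreasing `f` is convex, so it lies above its tangent lines:
`F x' - F x ≥ f x * (x' - x)`. Summing over the memories bounds the energy decrease from below by
`Σ_ξ f(c_ξ) (c'_ξ - c_ξ)`, which, after exchanging the two sums, is `1/N` times
`Σ_i (z'_i - z_i) h_i` with `h_i` the local field `Σ_ξ f(c_ξ) u^ξ_i`. Each term is nonnegative
because `z'_i h_i = |h_i| ≥ z_i h_i`.
-/

open Finset Set

theorem MonotoneOn.convexOn_of_hasDerivAt {D : Set ℝ} {f F : ℝ → ℝ} (hD : Convex ℝ D)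
    (hf : MonotoneOn f D) (hF : ∀ x ∈ D, HasDerivAt F (f x) x) : ConvexOn ℝ D F := by
  have hderiv : ∀ x ∈ interior D, deriv F x = f x := fun x hx => (hF x (interior_subset hx)).deriv
  refine MonotoneOn.convexOn_of_deriv hD
    (fun x hx => (hF x hx).continuousAt.continuousWithinAt)
    (fun x hx => (hF x (interior_subset hx)).differentiableAt.differentiableWithinAt) ?_
  intro x hx y hy hxy
  rw [hderiv x hx, hderiv y hy]
  exact hf (interior_subset hx) (interior_subset hy) hxy

theorem ConvexOn.mul_sub_le_sub_of_hasDerivAt {S : Set ℝ} {F : ℝ → ℝ} {F' x y : ℝ}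
    (hF : ConvexOn ℝ S F) (hx : x ∈ S) (hy : y ∈ S) (hF' : HasDerivAt F F' x) :
    F' * (y - x) ≤ F y - F x := by
  rcases lt_trichotomy x y with hxy | rfl | hyx
  · have := hF.le_slope_of_hasDerivAt hx hy hxy hF'
    rwa [slope_def_field, le_div_iff₀ (sub_pos.mpr hxy)] at this
  · simp
  · have := hF.slope_le_of_hasDerivAt hy hx hyx hF'
    rw [slope_def_field, div_le_iff₀ (sub_pos.mpr hyx)] at this
    linarith

theorem Real.sign_mul_self (r : ℝ) : Real.sign r * r = |r| := by
  rcases lt_trichotomy r 0 with hr | rfl | hr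
  · rw [Real.sign_of_neg hr, abs_of_neg hr, neg_one_mul]
  · simp
  · rw [Real.sign_of_pos hr, abs_of_pos hr, one_mul]

theorem abs_le_one_of_sign_update {z z' h : ℝ} (hz : |z| ≤ 1)
    (hupd : h ≠ 0 → z' = Real.sign h) (hupd0 : h = 0 → z' = z) : |z'| ≤ 1 := by
  by_cases h0 : h = 0
  · rwa [hupd0 h0]
  · rw [hupd h0]
    rcases Real.sign_apply_eq h with hs | hs | hs <;> simp [hs]

theorem sub_mul_nonneg_of_sign_update {z z' h : ℝ} (hz : |z| ≤ 1)
    (hupd : h ≠ 0 → z' = Real.sign h) : 0 ≤ (z' - z) * h := by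
  by_cases h0 : h = 0
  · simp [h0]
  · have hzh : z * h ≤ |h| :=
      calc z * h ≤ |z * h| := le_abs_self _
        _ = |z| * |h| := abs_mul z h
        _ ≤ |h| := mul_le_of_le_one_left (abs_nonneg h) hz
    rw [sub_mul, hupd h0, Real.sign_mul_self]
    linarith

/-- The paper's `c_ξ(z)` is `overlap z (u ξ)`. -/
noncomputable def overlap {N : ℕ} (w v : Fin N → ℝ) : ℝ := (1 / (N : ℝ)) * ∑ j, w j * v j

theorem overlap_mem_Icc {N : ℕ} {w v : Fin N → ℝ} (hw : ∀ j, |w j| ≤ 1) (hv : ∀ j, |v j| ≤ 1) :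
    overlap w v ∈ Icc (-1 : ℝ) 1 := by
  rw [Set.mem_Icc, ← abs_le, overlap, abs_mul, abs_of_nonneg (by positivity)]
  calc 1 / (N : ℝ) * |∑ j, w j * v j|
      ≤ 1 / (N : ℝ) * ∑ _j : Fin N, (1 : ℝ) := by
        gcongr
        refine (abs_sum_le_sum_abs _ _).trans (sum_le_sum fun j _ => ?_)
        rw [abs_mul]
        exact mul_le_one₀ (hw j) (abs_nonneg _) (hv j)
    _ = (N : ℝ) / N := by simp [div_eq_inv_mul]
    _ ≤ 1 := div_self_le_one _

theorem sum_mul_overlap_sub {N P : ℕ} (a : Fin P → ℝ) (u : Fin P → Fin N → ℝ)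
    (z z' : Fin N → ℝ) :
    ∑ ξ, a ξ * (overlap z' (u ξ) - overlap z (u ξ)) =
      1 / (N : ℝ) * ∑ i, (z' i - z i) * ∑ ξ, a ξ * u ξ i := by
  simp only [overlap, ← mul_sub, ← sum_sub_distrib, mul_sum]
  rw [sum_comm]
  refine sum_congr rfl fun i _ => sum_congr rfl fun ξ _ => ?_
  ring

theorem rcam_energy_decrease_bound_general
    (N P : ℕ) (f F : ℝ → ℝ)
    (hf_mono : MonotoneOn f (Set.Icc (-1 : ℝ) 1))
    (hF : ∀ x ∈ Set.Icc (-1 : ℝ) 1, HasDerivAt F (f x) x)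
    (u : Fin P → Fin N → ℝ) (hu : ∀ ξ i, u ξ i = 1 ∨ u ξ i = -1)
    (z z' : Fin N → ℝ) (hz : ∀ i, z i = 1 ∨ z i = -1)
    (hupd : ∀ i, (∑ ξ, f ((1 / (N : ℝ)) * ∑ j, z j * u ξ j) * u ξ i) ≠ 0 →
      z' i = Real.sign (∑ ξ, f ((1 / (N : ℝ)) * ∑ j, z j * u ξ j) * u ξ i))
    (hupd0 : ∀ i, (∑ ξ, f ((1 / (N : ℝ)) * ∑ j, z j * u ξ j) * u ξ i) = 0 →
      z' i = z i) :
    (∀ x ∈ Set.Icc (-1 : ℝ) 1, ∀ x' ∈ Set.Icc (-1 : ℝ) 1,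
      f x * (x' - x) ≤ F x' - F x) ∧
    (∑ ξ, f ((1 / (N : ℝ)) * ∑ j, z j * u ξ j) *
        ((1 / (N : ℝ)) * ∑ j, z' j * u ξ j - (1 / (N : ℝ)) * ∑ j, z j * u ξ j))
      ≤ ∑ ξ, (F ((1 / (N : ℝ)) * ∑ j, z' j * u ξ j) -
              F ((1 / (N : ℝ)) * ∑ j, z j * u ξ j)) ∧
    0 ≤ ∑ ξ, f ((1 / (N : ℝ)) * ∑ j, z j * u ξ j) *
        ((1 / (N : ℝ)) * ∑ j, z' j * u ξ j - (1 / (N : ℝ)) * ∑ j, z j * u ξ j) := by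
  have tangent : ∀ x ∈ Icc (-1 : ℝ) 1, ∀ x' ∈ Icc (-1 : ℝ) 1, f x * (x' - x) ≤ F x' - F x :=
    fun x hx x' hx' => (hf_mono.convexOn_of_hasDerivAt (convex_Icc _ _) hF)
      |>.mul_sub_le_sub_of_hasDerivAt hx hx' (hF x hx)
  have abs_le_one {s : ℝ} (hs : s = 1 ∨ s = -1) : |s| ≤ 1 := by rcases hs with rfl | rfl <;> simp
  have hz_abs i := abs_le_one (hz i)
  have hu_abs ξ i := abs_le_one (hu ξ i)
  have hz'_abs i := abs_le_one_of_sign_update (hz_abs i) (hupd i) (hupd0 i)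
  refine ⟨tangent, sum_le_sum fun ξ _ => tangent _ (overlap_mem_Icc hz_abs (hu_abs ξ)) _
    (overlap_mem_Icc hz'_abs (hu_abs ξ)), ?_⟩
  exact (sum_mul_overlap_sub (fun ξ => f (overlap z (u ξ))) u z z').ge.trans'
    (mul_nonneg (by positivity) (sum_nonneg fun i _ =>
      sub_mul_nonneg_of_sign_update (hz_abs i) (hupd i)))

/-- If `f` is continuous and nondecreasing on `[-1,1]` with antiderivative `F`
(hence `F` convex there), then `F x' - F x ≥ f x * (x' - x)` for `x, x'` in
`[-1,1]`; consequently, for a state `z` and its RCAM successor `z'`, the energy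
decrease `-ΔE = Σ_ξ (F c'_ξ - F c_ξ)` is at least `Σ_ξ f(c_ξ) (c'_ξ - c_ξ) ≥ 0`,
where `c_ξ = (1/N)⟨z,u^ξ⟩` and `c'_ξ = (1/N)⟨z',u^ξ⟩`. -/
theorem rcam_energy_decrease_bound
    (N P : ℕ) (hN : 0 < N) (f F : ℝ → ℝ)
    (hf_cont : ContinuousOn f (Set.Icc (-1 : ℝ) 1))
    (hf_mono : MonotoneOn f (Set.Icc (-1 : ℝ) 1))
    (hF : ∀ x ∈ Set.Icc (-1 : ℝ) 1, HasDerivAt F (f x) x)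
    (u : Fin P → Fin N → ℝ) (hu : ∀ ξ i, u ξ i = 1 ∨ u ξ i = -1)
    (z z' : Fin N → ℝ) (hz : ∀ i, z i = 1 ∨ z i = -1)
    (hupd : ∀ i, (∑ ξ, f ((1 / (N : ℝ)) * ∑ j, z j * u ξ j) * u ξ i) ≠ 0 →
      z' i = Real.sign (∑ ξ, f ((1 / (N : ℝ)) * ∑ j, z j * u ξ j) * u ξ i))
    (hupd0 : ∀ i, (∑ ξ, f ((1 / (N : ℝ)) * ∑ j, z j * u ξ j) * u ξ i) = 0 →
      z' i = z i) :
    (∀ x ∈ Set.Icc (-1 : ℝ) 1, ∀ x' ∈ Set.Icc (-1 : ℝ) 1,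
      f x * (x' - x) ≤ F x' - F x) ∧
    (∑ ξ, f ((1 / (N : ℝ)) * ∑ j, z j * u ξ j) *
        ((1 / (N : ℝ)) * ∑ j, z' j * u ξ j - (1 / (N : ℝ)) * ∑ j, z j * u ξ j))
      ≤ ∑ ξ, (F ((1 / (N : ℝ)) * ∑ j, z' j * u ξ j) -
              F ((1 / (N : ℝ)) * ∑ j, z j * u ξ j)) ∧
    0 ≤ ∑ ξ, f ((1 / (N : ℝ)) * ∑ j, z j * u ξ j) *
        ((1 / (N : ℝ)) * ∑ j, z' j * u ξ j - (1 / (N : ℝ)) * ∑ j, z j * u ξ j) :=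
  rcam_energy_decrease_bound_general N P f F hf_mono hF u hu z z' hz hupd hupd0
end

section
/- If a fundamental memory u^η is presented as the initial state of the exponential RCAM, if for all ξ ≠ η, ⟨u^η, u^ξ⟩ ≤ N - 2, and if (P-1)·e^{α(1 - 2/N)} < e^{α}, i.e., (P-1) < e^{2α/N}, then u^η is a fixed point of the exponential RCAM. -/
/-- If the fundamental memories of the exponential RCAM are pairwise distinct
and `(P-1) * exp (α (N-2)/N) < exp α` (equivalently `P - 1 < exp (2α/N)`), then
each fundamental memory `u^η` is a fixed point of the exponential RCAM: for
every `i`, the activation at state `u^η` has the sign of `u^η i`. -/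
theorem exponential_rcam_memories_are_fixed_points
    (N P : ℕ) (hN : 0 < N) (α : ℝ) (hα : 0 < α)
    (u : Fin P → Fin N → ℝ) (hu : ∀ ξ i, u ξ i = 1 ∨ u ξ i = -1)
    (hdist : ∀ ξ η, ξ ≠ η → u ξ ≠ u η)
    (hcond : ((P : ℝ) - 1) * Real.exp (α * ((N : ℝ) - 2) / N) < Real.exp α) :
    ∀ η i,
      (∑ ξ, Real.exp (α * (∑ j, u η j * u ξ j) / N) * u ξ i) ≠ 0 ∧
      Real.sign (∑ ξ, Real.exp (α * (∑ j, u η j * u ξ j) / N) * u ξ i) = u η i := by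
  intro η i
  have hNR : (0:ℝ) < N := by exact_mod_cast hN
  set S := ∑ ξ, Real.exp (α * (∑ j, u η j * u ξ j) / N) * u ξ i with hS
  -- inner product with itself is N
  have hself : (∑ j, u η j * u η j) = (N:ℝ) := by
    have : ∀ j, u η j * u η j = 1 := by
      intro j; rcases hu η j with h | h <;> rw [h] <;> ring
    simp [this]
  -- inner product bound for ξ ≠ η
  have hip : ∀ ξ, ξ ≠ η → (∑ j, u η j * u ξ j) ≤ (N:ℝ) - 2 := by
    intro ξ hξ
    have hne := hdist ξ η hξ
    have : ∃ j, u ξ j ≠ u η j := by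
      by_contra h; push_neg at h; exact hne (funext h)
    obtain ⟨j0, hj0⟩ := this
    have hprod : u η j0 * u ξ j0 = -1 := by
      rcases hu η j0 with h1 | h1 <;> rcases hu ξ j0 with h2 | h2
      · exact absurd (h2.trans h1.symm) hj0
      · rw [h1, h2]; ring
      · rw [h1, h2]; ring
      · exact absurd (h2.trans h1.symm) hj0
    have hsplit : (∑ j, u η j * u ξ j)
        = (∑ j ∈ Finset.univ.erase j0, u η j * u ξ j) + u η j0 * u ξ j0 := by
      rw [Finset.sum_erase_add _ _ (Finset.mem_univ j0)]
    have hbound : (∑ j ∈ Finset.univ.erase j0, u η j * u ξ j) ≤ (N:ℝ) - 1 := by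
      have hcard : (Finset.univ.erase j0).card = N - 1 := by
        simp [Finset.card_erase_of_mem]
      calc (∑ j ∈ Finset.univ.erase j0, u η j * u ξ j)
          ≤ ∑ j ∈ Finset.univ.erase j0, 1 := by
            apply Finset.sum_le_sum
            intro j _
            rcases hu η j with h1 | h1 <;> rcases hu ξ j with h2 | h2 <;>
              rw [h1, h2] <;> norm_num
        _ = ((N:ℝ) - 1) := by
            rw [Finset.sum_const, hcard, nsmul_eq_mul, Nat.cast_sub hN]
            push_cast; ring
    rw [hsplit, hprod]; linarith
  have hPpos : 1 ≤ P := by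
    have := η; exact Nat.one_le_iff_ne_zero.mpr (by rintro rfl; exact absurd this.2 (by simp))
  -- split the sum
  have hsplitS : S = (∑ ξ ∈ Finset.univ.erase η, Real.exp (α * (∑ j, u η j * u ξ j) / N) * u ξ i)
      + Real.exp α * u η i := by
    rw [hS, ← Finset.sum_erase_add _ _ (Finset.mem_univ η), hself]
    rw [mul_div_assoc, div_self (ne_of_gt hNR), mul_one]
  set E := ∑ ξ ∈ Finset.univ.erase η, Real.exp (α * (∑ j, u η j * u ξ j) / N) * u ξ i with hE
  have habs : |E| ≤ ((P:ℝ) - 1) * Real.exp (α * ((N:ℝ) - 2) / N) := by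
    calc |E| ≤ ∑ ξ ∈ Finset.univ.erase η, |Real.exp (α * (∑ j, u η j * u ξ j) / N) * u ξ i| :=
          Finset.abs_sum_le_sum_abs _ _
      _ ≤ ∑ ξ ∈ Finset.univ.erase η, Real.exp (α * ((N:ℝ) - 2) / N) := by
          apply Finset.sum_le_sum
          intro ξ hξ
          have hξη : ξ ≠ η := (Finset.mem_erase.mp hξ).1
          have h1 : |u ξ i| = 1 := by rcases hu ξ i with h | h <;> rw [h] <;> norm_num
          rw [abs_mul, h1, mul_one, abs_of_pos (Real.exp_pos _)]
          apply Real.exp_le_exp.mpr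
          gcongr
          exact hip ξ hξη
      _ = ((P:ℝ) - 1) * Real.exp (α * ((N:ℝ) - 2) / N) := by
          rw [Finset.sum_const, Finset.card_erase_of_mem (Finset.mem_univ η)]
          simp [Nat.cast_sub hPpos]
  have hkey : 0 < u η i * S := by
    have h2 : u η i * u η i = 1 := by rcases hu η i with h | h <;> rw [h] <;> ring
    have h4 : |u η i| = 1 := by rcases hu η i with h | h <;> rw [h] <;> norm_num
    have h3 : u η i * E ≥ -|E| := by
      have h5 := neg_abs_le (u η i * E)
      rw [abs_mul, h4, one_mul] at h5; exact h5
    have : u η i * S = u η i * E + Real.exp α := by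
      rw [hsplitS, mul_add,
        show u η i * (Real.exp α * u η i) = Real.exp α * (u η i * u η i) from by ring,
        h2, mul_one]
    rw [this]; linarith
  rcases hu η i with h | h
  · rw [h] at hkey ⊢; rw [one_mul] at hkey
    exact ⟨ne_of_gt hkey, Real.sign_of_pos hkey⟩
  · rw [h] at hkey ⊢
    have hSneg : S < 0 := by nlinarith
    exact ⟨ne_of_lt hSneg, Real.sign_of_neg hSneg⟩
end
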